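/- Let n ≥ 3. Then the number of permutations p of {1,…,n} in which the entry p_{n−1} has exactly one child in the minmax tree T^m_p is exactly 2·n!/3. -/

import Mathlib

/-- Binary trees with natural-number labels, used to model minmax trees of
permutations. -/
inductive BTree where
  | nil : BTree
  | node : ℕ → BTree → BTree → BTree
deriving DecidableEq, Repr

namespace BTree

/-- The label of the root (if any). -/
def rootVal : BTree → Option ℕ
  | .nil => none
  | .node v _ _ => some v

/-- Whether the value `x` occurs as a label in the tree. -/
def memB : BTree → ℕ → Bool
  | .nil, _ => false
  | .node v l r, x => (x == v) || memB l x || memB r x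

/-- The number of children of the (unique, for permutations) node labelled `x`. -/
def numChildren : BTree → ℕ → ℕ
  | .nil, _ => 0
  | .node v l r, x =>
      if x = v then (if l = .nil then 0 else 1) + (if r = .nil then 0 else 1)
      else numChildren l x + numChildren r x

/-- `x` is a leaf of the tree: it occurs in the tree and has no children. -/
def IsLeaf (t : BTree) (x : ℕ) : Prop := t.memB x = true ∧ t.numChildren x = 0

instance (t : BTree) (x : ℕ) : Decidable (t.IsLeaf x) := by unfold IsLeaf; infer_instance

/-- `childB t x y = true` iff `x` is a child of `y` in `t`, i.e. `x` is the root of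
the left or the right subtree hanging from `y`. -/
def childB : BTree → ℕ → ℕ → Bool
  | .nil, _, _ => false
  | .node v l r, x, y =>
      ((y == v) && (l.rootVal == some x || r.rootVal == some x))
      || childB l x y || childB r x y

/-- `ancB t x y = true` iff `x` is a (strict) ancestor of `y` in `t`, i.e. `y` lies
in a subtree hanging from `x`. -/
def ancB : BTree → ℕ → ℕ → Bool
  | .nil, _, _ => false
  | .node v l r, x, y =>
      ((x == v) && (memB l y || memB r y)) || ancB l x y || ancB r x y

end BTree

/-- `x` is the leftmost-eligible extreme letter of `l`: the minimum or the maximum. -/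
def isExtreme (l : List ℕ) (x : ℕ) : Bool :=
  (l.min? == some x) || (l.max? == some x)

/-- Fuelled construction of the minmax tree of a list of distinct naturals:
split the list as `u ++ [m] ++ v` where `m` is the leftmost of the minimum and
maximum letters, put `m` at the root and recurse on `u` (left) and `v` (right). -/
def mmAux : ℕ → List ℕ → BTree
  | 0, _ => .nil
  | fuel+1, l =>
    if l.isEmpty then .nil
    else
      let k := l.findIdx (isExtreme l)
      .node (l.getD k 0) (mmAux fuel (l.take k)) (mmAux fuel (l.drop (k+1)))

/-- The minmax tree `T^m_p` of a word `l` (with distinct letters). -/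
def minmaxTree (l : List ℕ) : BTree := mmAux l.length l

/-- The word `p_1 p_2 … p_n` on the letters `{1,…,n}` associated to a permutation
`p` of `Fin n`. -/
def permList (n : ℕ) (p : Equiv.Perm (Fin n)) : List ℕ :=
  List.ofFn (fun i => (p i : ℕ) + 1)

/-- The `i`-th entry `p_i` (1-indexed) of the permutation `p`. -/
def entryAt (n : ℕ) (p : Equiv.Perm (Fin n)) (i : ℕ) : ℕ :=
  (permList n p).getD (i - 1) 0

/-!
Write the word as `w a b c`. As long as the extreme letter chosen at the root lies in `w`, the
entry `b` stays in the right subtree, which is the minmax tree of a shorter word `w' a b c`.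
If the chosen letter is `a`, then `b` is the root of the tree of `b c` and has one child, and
`a`, being extreme, is not strictly between `b` and `c`. If it is `b`, both extremes avoid
`w' a`, so they are `b` and `c`; then `a` lies strictly between `b` and `c`, and `b` has the two
children coming from `w' a` and `c`. It cannot be `c`, which would then be both the minimum
and the maximum. So `p_{n-1}` has one child unless `p_{n-2}` lies strictly between `p_{n-1}`
and `p_n`, and rotating the last three positions shows that exactly one third of all
permutations have that property.
-/

open BTree Finset Nat

theorem isExtreme_eq_true_iff {l : List ℕ} {x : ℕ} :
    isExtreme l x = true ↔ x ∈ l ∧ ((∀ y ∈ l, x ≤ y) ∨ ∀ y ∈ l, y ≤ x) := by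
  simp only [isExtreme, Bool.or_eq_true, beq_iff_eq, List.min?_eq_some_iff,
    List.max?_eq_some_iff]
  tauto

theorem exists_isExtreme_of_mem {l : List ℕ} {x : ℕ} (hx : x ∈ l) :
    ∃ lo ∈ l, ∃ hi ∈ l, isExtreme l lo = true ∧ isExtreme l hi = true ∧
      ∀ z ∈ l, lo ≤ z ∧ z ≤ hi := by
  obtain ⟨lo, hlo⟩ := Option.isSome_iff_exists.mp (List.isSome_min?_of_mem hx)
  obtain ⟨hi, hhi⟩ := Option.isSome_iff_exists.mp (List.isSome_max?_of_mem hx)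
  have hlo_ext : isExtreme l lo = true := by simp [isExtreme, hlo]
  have hhi_ext : isExtreme l hi = true := by simp [isExtreme, hhi]
  rw [List.min?_eq_some_iff] at hlo
  rw [List.max?_eq_some_iff] at hhi
  exact ⟨lo, hlo.1, hi, hhi.1, hlo_ext, hhi_ext, fun z hz => ⟨hlo.2 z hz, hhi.2 z hz⟩⟩

theorem findIdx_isExtreme_lt_length {l : List ℕ} (hl : l ≠ []) :
    l.findIdx (isExtreme l) < l.length := by
  obtain ⟨x, hx⟩ := List.exists_mem_of_ne_nil l hl
  obtain ⟨lo, hlo, -, -, hlo_ext, -⟩ := exists_isExtreme_of_mem hx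
  exact List.findIdx_lt_length_of_exists ⟨lo, hlo, hlo_ext⟩

theorem mmAux_eq_mmAux {f g : ℕ} {l : List ℕ} (hf : l.length ≤ f) (hg : l.length ≤ g) :
    mmAux f l = mmAux g l := by
  induction f generalizing g l with
  | zero =>
    obtain rfl : l = [] := List.eq_nil_of_length_eq_zero (Nat.le_zero.mp hf)
    cases g <;> simp [mmAux]
  | succ f ih =>
    cases g with
    | zero => simp_all [mmAux]
    | succ g =>
      rcases eq_or_ne l [] with rfl | hl
      · simp [mmAux]
      have hk := findIdx_isExtreme_lt_length hl
      simp only [mmAux]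
      congr 2 <;> apply ih <;> simp only [List.length_take, List.length_drop] <;> omega

theorem mmAux_eq_minmaxTree {f : ℕ} {l : List ℕ} (hf : l.length ≤ f) :
    mmAux f l = minmaxTree l :=
  mmAux_eq_mmAux hf le_rfl

theorem minmaxTree_append_cons {u v : List ℕ} {m : ℕ}
    (hm : isExtreme (u ++ m :: v) m = true)
    (hu : ∀ x ∈ u, isExtreme (u ++ m :: v) x = false) :
    minmaxTree (u ++ m :: v) = .node m (minmaxTree u) (minmaxTree v) := by
  have hk : (u ++ m :: v).findIdx (isExtreme (u ++ m :: v)) = u.length := by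
    rw [List.findIdx_append, List.findIdx_eq_length.mpr hu, List.findIdx_cons, hm]
    simp
  rw [minmaxTree, List.length_append, List.length_cons, ← add_assoc, mmAux]
  simp only [List.isEmpty_eq_false_iff.mpr (by simp : u ++ m :: v ≠ []), Bool.false_eq_true,
    if_false, hk]
  rw [mmAux_eq_minmaxTree (by simp), mmAux_eq_minmaxTree (by simp)]
  simp

theorem exists_minmaxTree_eq_node {l : List ℕ} (hl : l ≠ []) :
    ∃ u m v, l = u ++ m :: v ∧ isExtreme l m = true ∧
      (∀ x ∈ u, isExtreme l x = false) ∧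
      minmaxTree l = .node m (minmaxTree u) (minmaxTree v) := by
  set p : ℕ → Bool := fun x => !isExtreme l x
  have hdrop : l.dropWhile p ≠ [] := by
    obtain ⟨x, hx⟩ := List.exists_mem_of_ne_nil l hl
    obtain ⟨lo, hlo, -, -, hlo_ext, -⟩ := exists_isExtreme_of_mem hx
    rw [Ne, List.dropWhile_eq_nil_iff]
    exact fun h => by simpa [p, hlo_ext] using h lo hlo
  obtain ⟨m, v, hmv⟩ := List.exists_cons_of_ne_nil hdrop
  have hsplit : l = l.takeWhile p ++ m :: v := by rw [← hmv, List.takeWhile_append_dropWhile]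
  have hm : isExtreme l m = true := by
    simpa [p, hmv] using List.head_dropWhile_not p hdrop
  have hu : ∀ x ∈ l.takeWhile p, isExtreme l x = false := by
    intro x hx; simpa [p] using List.mem_takeWhile_imp hx
  set u := l.takeWhile p
  clear_value u
  subst hsplit
  exact ⟨u, m, v, rfl, hm, hu, minmaxTree_append_cons hm hu⟩

@[simp]
theorem minmaxTree_nil : minmaxTree [] = .nil := rfl

theorem minmaxTree_ne_nil {l : List ℕ} (hl : l ≠ []) : minmaxTree l ≠ .nil := by
  obtain ⟨u, m, v, -, -, -, htree⟩ := exists_minmaxTree_eq_node hl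
  simp [htree]

theorem numChildren_minmaxTree_of_not_mem {l : List ℕ} {x : ℕ} (hx : x ∉ l) :
    (minmaxTree l).numChildren x = 0 := by
  rcases eq_or_ne l [] with rfl | hl
  · rfl
  obtain ⟨u, m, v, rfl, -, -, htree⟩ := exists_minmaxTree_eq_node hl
  have hxm : x ≠ m := by rintro rfl; simp at hx
  rw [htree, numChildren, if_neg hxm,
    numChildren_minmaxTree_of_not_mem (fun h => hx (by simp [h])),
    numChildren_minmaxTree_of_not_mem (fun h => hx (by simp [h]))]
termination_by l.length
decreasing_by all_goals subst_vars; simp only [List.length_append, List.length_cons]; omega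

theorem numChildren_minmaxTree_pair (b c : ℕ) :
    (minmaxTree [b, c]).numChildren b = 1 := by
  have hb : isExtreme ([] ++ b :: [c]) b = true := by
    refine isExtreme_eq_true_iff.mpr ⟨by simp, ?_⟩
    rcases le_total b c with h | h
    · exact Or.inl (by simp [h])
    · exact Or.inr (by simp [h])
  rw [← List.nil_append [b, c], minmaxTree_append_cons hb (by simp)]
  simp [numChildren, minmaxTree_ne_nil]

theorem append_cons_eq_append_triple_cases {u v w : List ℕ} {m a b c : ℕ}
    (h : u ++ m :: v = w ++ [a, b, c]) :
    (∃ t, w = u ++ m :: t ∧ v = t ++ [a, b, c]) ∨ (u = w ∧ m = a ∧ v = [b, c]) ∨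
      (u = w ++ [a] ∧ m = b ∧ v = [c]) ∨ (u = w ++ [a, b] ∧ m = c ∧ v = []) := by
  rcases List.append_eq_append_iff.mp h with ⟨t, rfl, ht⟩ | ⟨t, rfl, ht⟩
  · rcases t with _ | ⟨x, t⟩ <;> simp_all
  · rcases t with _ | ⟨x, _ | ⟨y, _ | ⟨z, t⟩⟩⟩ <;> simp_all

theorem numChildren_minmaxTree_append_triple {w : List ℕ} {a b c : ℕ}
    (hnd : (w ++ [a, b, c]).Nodup) :
    (minmaxTree (w ++ [a, b, c])).numChildren b =
      if min b c < a ∧ a < max b c then 2 else 1 := by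
  have hdistinct := List.nodup_append.mp hnd
  have hbw : b ∉ w := fun h => hdistinct.2.2 b h b (by simp) rfl
  have hab : a ≠ b := by have := hdistinct.2.1; simp_all
  have hbc : b ≠ c := by have := hdistinct.2.1; simp_all
  obtain ⟨u, m, v, hsplit, hm, hu, htree⟩ := exists_minmaxTree_eq_node (l := w ++ [a, b, c])
    (by simp)
  obtain ⟨lo, hlo, hi, hhi, hlo_ext, hhi_ext, hbounds⟩ :=
    exists_isExtreme_of_mem (l := w ++ [a, b, c]) (x := a) (by simp)
  have hlo_u : lo ∉ u := fun h => by simp [hu lo h] at hlo_ext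
  have hhi_u : hi ∉ u := fun h => by simp [hu hi h] at hhi_ext
  rw [htree]
  rcases append_cons_eq_append_triple_cases hsplit.symm with
    ⟨t, rfl, rfl⟩ | ⟨rfl, rfl, rfl⟩ | ⟨rfl, rfl, rfl⟩ | ⟨rfl, rfl, rfl⟩
  · have hbm : b ≠ m := by rintro rfl; simp at hbw
    have hnd' : (t ++ [a, b, c]).Nodup := by
      rw [List.append_assoc, List.cons_append] at hnd
      exact hnd.of_append_right.of_cons
    rw [numChildren, if_neg hbm, numChildren_minmaxTree_of_not_mem (fun h => hbw (by simp [h])),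
      numChildren_minmaxTree_append_triple hnd', zero_add]
  · have hnot : ¬(min b c < m ∧ m < max b c) := by
      rcases (isExtreme_eq_true_iff.mp hm).2 with h | h <;>
        have := h b (by simp) <;> have := h c (by simp) <;> omega
    rw [if_neg hnot, numChildren, if_neg hab.symm, numChildren_minmaxTree_of_not_mem hbw,
      numChildren_minmaxTree_pair]
  · have hbetween : min m c < a ∧ a < max m c := by
      simp only [List.mem_append, List.mem_cons, List.not_mem_nil, or_false]
        at hlo hhi hlo_u hhi_u
      have : lo ≠ a ∧ hi ≠ a ∧ (lo = m ∨ lo = c) ∧ (hi = m ∨ hi = c) := by tauto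
      have := hbounds a (by simp)
      omega
    simp [numChildren, hbetween, minmaxTree_ne_nil]
  · simp only [List.mem_append, List.mem_cons, List.not_mem_nil, or_false]
      at hlo hhi hlo_u hhi_u
    have : lo = m ∧ hi = m := by tauto
    have := hbounds b (by simp)
    omega
termination_by w.length
decreasing_by all_goals subst_vars; simp only [List.length_append, List.length_cons]; omega

theorem ite_between_add_ite_between_add_ite_between {α : Type*} [LinearOrder α] {x y z : α}
    (hxy : x ≠ y) (hxz : x ≠ z) (hyz : y ≠ z) :
    ((if min y z < x ∧ x < max y z then 1 else 0) +
      (if min z x < y ∧ y < max z x then 1 else 0) +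
      (if min x y < z ∧ z < max x y then 1 else 0) : ℕ) = 1 := by
  simp only [min_lt_iff, lt_max_iff]
  rcases hxy.lt_or_gt with h1 | h1 <;> rcases hxz.lt_or_gt with h2 | h2 <;>
    rcases hyz.lt_or_gt with h3 | h3 <;>
    simp [h1, h2, h3, h1.not_gt, h2.not_gt, h3.not_gt] <;> order

theorem three_mul_card_filter_eq_card {α : Type*} [Fintype α] (σ : α ≃ α) (P : α → Prop)
    [DecidablePred P]
    (h : ∀ x, ((if P x then 1 else 0) + (if P (σ x) then 1 else 0) +
      (if P (σ (σ x)) then 1 else 0) : ℕ) = 1) :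
    3 * #{x | P x} = Fintype.card α := by
  have hσ : ∀ f : α → ℕ, ∑ x, f (σ x) = ∑ x, f x := Equiv.sum_comp σ
  calc 3 * #{x | P x}
      = ∑ x, ((if P x then 1 else 0) + (if P (σ x) then 1 else 0) +
          (if P (σ (σ x)) then 1 else 0) : ℕ) := by
        rw [sum_add_distrib, sum_add_distrib, hσ (fun x => if P (σ x) then 1 else 0),
          hσ (fun x => if P x then 1 else 0), card_filter]
        ring
    _ = Fintype.card α := by simp [h]

theorem three_mul_card_perm_between {ι : Type*} [Fintype ι] [LinearOrder ι]
    {i j k : ι} (hij : i ≠ j) (hik : i ≠ k) (hjk : j ≠ k) :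
    3 * #{p : Equiv.Perm ι | min (p j) (p k) < p i ∧ p i < max (p j) (p k)} =
      (Fintype.card ι)! := by
  set c : Equiv.Perm ι := Equiv.swap i j * Equiv.swap j k
  have hci : c i = j := by simp [c, Equiv.swap_apply_of_ne_of_ne hij hik]
  have hcj : c j = k := by simp [c, Equiv.swap_apply_of_ne_of_ne hik.symm hjk.symm]
  have hck : c k = i := by simp [c]
  rw [three_mul_card_filter_eq_card (Equiv.mulRight c) _ fun p => ?_, Fintype.card_perm]
  simpa [Equiv.Perm.mul_apply, hci, hcj, hck] using
    ite_between_add_ite_between_add_ite_between (p.injective.ne hij) (p.injective.ne hik)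
      (p.injective.ne hjk)

theorem permList_eq_append_triple (m : ℕ) (p : Equiv.Perm (Fin (m + 3))) :
    permList (m + 3) p = List.ofFn (fun i : Fin m => (p (Fin.castAdd 3 i) : ℕ) + 1) ++
      [(p (Fin.natAdd m 0) : ℕ) + 1, (p (Fin.natAdd m 1) : ℕ) + 1,
        (p (Fin.natAdd m 2) : ℕ) + 1] := by
  rw [permList, List.ofFn_add]
  simp only [List.ofFn_succ, List.ofFn_zero]
  rfl

theorem permList_nodup (n : ℕ) (p : Equiv.Perm (Fin n)) : (permList n p).Nodup :=
  List.nodup_ofFn.mpr fun i j hij => p.injective (Fin.ext (by simpa using hij))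

theorem numChildren_penultimate_entry_eq_one_iff (m : ℕ) (p : Equiv.Perm (Fin (m + 3))) :
    (minmaxTree (permList (m + 3) p)).numChildren (entryAt (m + 3) p (m + 3 - 1)) = 1 ↔
      ¬(min (p (Fin.natAdd m 1)) (p (Fin.natAdd m 2)) < p (Fin.natAdd m 0) ∧
        p (Fin.natAdd m 0) < max (p (Fin.natAdd m 1)) (p (Fin.natAdd m 2))) := by
  have hnd := permList_nodup (m + 3) p
  have hentry : entryAt (m + 3) p (m + 3 - 1) = (p (Fin.natAdd m 1) : ℕ) + 1 := by
    rw [entryAt, permList_eq_append_triple, List.getD_append_right _ _ _ _ (by simp)]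
    simp
  rw [permList_eq_append_triple] at hnd
  rw [hentry, permList_eq_append_triple, numChildren_minmaxTree_append_triple hnd, Fin.lt_def,
    Fin.lt_def, Fin.coe_min, Fin.coe_max]
  split_ifs <;> omega

/-- For `n ≥ 3`, the number of permutations `p` of `{1,…,n}` in
which the entry `p_{n-1}` has exactly one child in the minmax tree is `2·n!/3`. -/
theorem penultimate_entry_one_child_count (n : ℕ) (hn : 3 ≤ n) :
    (Finset.univ.filter (fun p : Equiv.Perm (Fin n) =>
        (minmaxTree (permList n p)).numChildren (entryAt n p (n - 1)) = 1)).card =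
      2 * n.factorial / 3 := by
  obtain ⟨m, rfl⟩ : ∃ m, n = m + 3 := ⟨n - 3, by omega⟩
  have hthird := three_mul_card_perm_between (ι := Fin (m + 3))
    (i := Fin.natAdd m 0) (j := Fin.natAdd m 1) (k := Fin.natAdd m 2)
    (by simp [Fin.ext_iff]) (by simp [Fin.ext_iff]) (by simp [Fin.ext_iff])
  simp only [numChildren_penultimate_entry_eq_one_iff]
  rw [Fintype.card_fin] at hthird
  rw [filter_not, card_sdiff_of_subset (filter_subset _ _), Finset.card_univ, Fintype.card_perm,
    Fintype.card_fin]
  omega
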